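/- Let γ=((a,b),(c,d)) be a 2×2 integer matrix with det γ ≠ 0, and let R be any complete set of coset representatives for ℤ² modulo the subgroup ℤ²γᵀ := {μγᵀ : μ∈ℤ²}. Then for every x ∈ ℝ²: Σ_{μ∈R} B̄₂(⟨x+μ, γ⁻¹_{1*}⟩) = (gcd(b,d)²/|det γ|)·B̄₂((det γ/gcd(b,d))·⟨x, γ⁻¹_{1*}⟩) and Σ_{μ∈R} B̄₂(⟨x+μ, γ⁻¹_{2*}⟩) = (gcd(a,c)²/|det γ|)·B̄₂((det γ/gcd(a,c))·⟨x, γ⁻¹_{2*}⟩), where γ⁻¹_{1*} = (d,−b)/det γ and γ⁻¹_{2*} = (−c,a)/det γ are the rows of γ⁻¹ and ⟨·,·⟩ is the dot product. In particular these sums are independent of the choice of R. -/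

import Mathlib

open scoped Pointwise Classical
open MeasureTheory

/-- Periodic Bernoulli function `B̄₁`. -/
noncomputable def B1 (y : ℝ) : ℝ := if ∃ n : ℤ, (n : ℝ) = y then 0 else Int.fract y - 1 / 2

/-- Periodic Bernoulli function `B̄₂`. -/
noncomputable def B2 (y : ℝ) : ℝ := Int.fract y ^ 2 - Int.fract y + 1 / 6

/-- Dedekind–Rademacher sum `S(a,c;x)`. -/
noncomputable def DR (a c : ℤ) (x₁ x₂ : ℝ) : ℝ :=
  ∑ m ∈ Finset.range c.natAbs, B1 (x₁ + (x₂ + m) * a / c) * B1 ((x₂ + m) / c)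

/-- Indicator function of `ℤ ⊆ ℚ`. -/
def indZ (q : ℚ) : ℝ := if q.den = 1 then 1 else 0

/-- The cocycle `𝔷₀(γ)(x, ω)` for `γ` with entries `a, b, c, d` and `c ≠ 0`;
only `a` and `c` enter the formula. -/
noncomputable def Z0 (a c : ℤ) (x₁ x₂ : ℚ) (ω₁ ω₂ : ℝ) : ℝ :=
  (Int.gcd a c : ℝ) ^ 2 / (2 * c * ((a : ℝ) + c * (ω₂ / ω₁))) *
      B2 (((c : ℝ) / (Int.gcd a c : ℝ)) * (x₁ : ℝ) - ((a : ℝ) / (Int.gcd a c : ℝ)) * (x₂ : ℝ))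
    + ((a : ℝ) + c * (ω₂ / ω₁)) / (2 * c) * B2 (x₂ : ℝ)
    + Real.sign (c : ℝ) * DR (-a) c (x₁ : ℝ) (x₂ : ℝ)
    - Real.sign ((c : ℝ) * ((a : ℝ) + c * (ω₂ / ω₁))) / 4 * indZ x₁ * indZ x₂

/-- The closed triangle `T_γ` in `ℝ²` with vertices `(0,0)`, `(a−1,c)`, `(−1,0)`. -/
def Tri (a c : ℤ) : Set (ℝ × ℝ) :=
  convexHull ℝ {((0 : ℝ), (0 : ℝ)), (((a : ℝ) - 1), (c : ℝ)), ((-1 : ℝ), (0 : ℝ))}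

/-- Number of integral points in a subset of `ℝ²`. -/
noncomputable def latticeCount (S : Set (ℝ × ℝ)) : ℕ :=
  Set.ncard {p : ℤ × ℤ | ((p.1 : ℝ), (p.2 : ℝ)) ∈ S}

/-- The `0`th Ehrhart coefficient `G₀(ℓ⁻¹ T_σ, m)` of the dilated triangle `ℓ⁻¹ T_σ`,
obtained by subtracting the second and first Ehrhart coefficient terms from the
lattice point count of `(m/ℓ)·T_σ`. -/
noncomputable def G0 (aσ cσ : ℤ) (ℓσ ℓ : ℕ) (m : ℕ) : ℝ :=
  (latticeCount (((m : ℝ) / (ℓ : ℝ)) • Tri aσ cσ) : ℝ)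
    - (cσ : ℝ) / (2 * (ℓ : ℝ) ^ 2) * (m : ℝ) ^ 2
    - ((ℓσ : ℝ) + 2) / (2 * (ℓ : ℝ)) * (m : ℝ)

/-!
Write `D = det γ` and `g = gcd(b, d)`. The linear form `ℓ(μ) = d μ₁ - b μ₂` is `g` times a
primitive form, kills `(b, d)` and sends `(a, c)` to `D`, so the summand `B̄₂((X + ℓ(μ))/D)` is
constant on cosets of `ℤ²γᵀ` and the sum does not depend on `R`. Completing `ℓ/g` to a unimodular
change of coordinates turns `ℤ²γᵀ` into the triangular lattice spanned by `(D/g, e)` and `(0, g)`,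
which has the explicit transversal `[0, |D/g|) × [0, g)`; on it the summand only depends on the
first coordinate, and the multiplication formula `∑_{k<N} B̄₂(y + k/N) = B̄₂(N y)/N` finishes.
The second identity is the first one for `γ` with its columns swapped.
-/

open Finset Function Submodule

theorem B2_periodic : Periodic B2 1 := fun y => by simp only [B2, Int.fract_add_one]

theorem B2_add_intCast (y : ℝ) (n : ℤ) : B2 (y + n) = B2 y := by
  simpa using B2_periodic.int_mul n y

theorem B2_neg (y : ℝ) : B2 (-y) = B2 y := by
  rcases eq_or_ne (Int.fract y) 0 with h | h
  · simp only [B2, Int.fract_neg_eq_zero.mpr h, h]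
  · simp only [B2, Int.fract_neg h]; ring

theorem sum_range_cast_sq (n : ℕ) :
    ∑ k ∈ range n, (k : ℝ) ^ 2 = n * (n - 1) * (2 * n - 1) / 6 := by
  induction n with
  | zero => simp
  | succ m ih => rw [sum_range_succ, ih]; push_cast; ring

theorem sum_range_cast_id (n : ℕ) : ∑ k ∈ range n, (k : ℝ) = n * (n - 1) / 2 := by
  induction n with
  | zero => simp
  | succ m ih => rw [sum_range_succ, ih]; push_cast; ring

theorem sum_range_B2_add_div_of_mem_Ico {N : ℕ} (hN : 0 < N) {y : ℝ}
    (hy : y ∈ Set.Ico 0 (1 / N : ℝ)) :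
    ∑ k ∈ range N, B2 (y + k / N) = B2 (N * y) / N := by
  have hNr : (0 : ℝ) < N := by exact_mod_cast hN
  have hNy : N * y ∈ Set.Ico (0 : ℝ) 1 := by
    constructor
    · exact mul_nonneg hNr.le hy.1
    · exact (lt_div_iff₀' hNr).mp (one_div (N : ℝ) ▸ hy.2)
  have hterm : ∀ k ∈ range N, B2 (y + k / N)
      = (y ^ 2 - y + 1 / 6) + (2 * y - 1) / N * k + 1 / N ^ 2 * (k : ℝ) ^ 2 := by
    intro k hk
    have hkN : (k : ℝ) + 1 ≤ N := by exact_mod_cast mem_range.mp hk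
    have hlt : y + k / N < 1 := by
      calc y + k / N < 1 / N + (N - 1) / N :=
            add_lt_add_of_lt_of_le hy.2 (by gcongr; linarith)
        _ = 1 := by field_simp; ring
    rw [B2, Int.fract_eq_self.mpr ⟨by linarith [hy.1, div_nonneg k.cast_nonneg hNr.le], hlt⟩]
    field_simp
    ring
  rw [sum_congr rfl hterm, sum_add_distrib, sum_add_distrib, ← mul_sum, ← mul_sum,
    sum_range_cast_id, sum_range_cast_sq, sum_const, card_range, nsmul_eq_mul, B2,
    Int.fract_eq_self.mpr hNy]
  field_simp
  ring

theorem sum_range_B2_add_div {N : ℕ} (hN : 0 < N) (y : ℝ) :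
    ∑ k ∈ range N, B2 (y + k / N) = B2 (N * y) / N := by
  have hNr : (0 : ℝ) < N := by exact_mod_cast hN
  set f : ℝ → ℝ := fun y => ∑ k ∈ range N, B2 (y + k / N) - B2 (N * y) / N with hf
  -- both sides are `1/N`-periodic: shifting `y` by `1/N` cyclically permutes the summands
  have hper : Periodic f (1 / N) := by
    intro y
    have hshift : ∑ k ∈ range N, B2 (y + 1 / N + k / N) = ∑ k ∈ range N, B2 (y + k / N) := by
      have h := sum_range_succ' (fun k : ℕ => B2 (y + k / N)) N
      rw [sum_range_succ] at h
      simp only [Nat.cast_add, Nat.cast_one, Nat.cast_zero, zero_div, add_zero,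
        div_self hNr.ne', B2_periodic y] at h
      convert (add_right_cancel h).symm using 3
      ring
    have hrhs : B2 (N * (y + 1 / N)) = B2 (N * y) := by
      rw [mul_add, mul_one_div_cancel hNr.ne', B2_periodic]
    simp only [hf, hshift, hrhs]
  have hy₀ : y - ⌊N * y⌋ * (1 / N) ∈ Set.Ico 0 (1 / N : ℝ) := by
    have h := Int.fract_nonneg (N * y)
    have h' := Int.fract_lt_one (N * y)
    rw [Int.fract] at h h'
    constructor
    · rw [← mul_nonneg_iff_of_pos_left hNr]; field_simp at h ⊢; linarith
    · rw [← mul_lt_mul_iff_of_pos_left hNr]; field_simp at h' ⊢; linarith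
  suffices f y = 0 from sub_eq_zero.mp this
  rw [← hper.sub_int_mul_eq ⌊N * y⌋]
  simp only [hf]
  rw [sum_range_B2_add_div_of_mem_Ico hN hy₀, sub_self]

theorem sum_range_natAbs_B2_add_div {n : ℤ} (hn : n ≠ 0) (y : ℝ) :
    ∑ k ∈ range n.natAbs, B2 (y + k / n) = B2 (n * y) / |(n : ℝ)| := by
  obtain ⟨N, rfl | rfl⟩ := Int.eq_nat_or_neg n
  · have hN : 0 < N := by omega
    simp [sum_range_B2_add_div hN]
  · have hN : 0 < N := by omega
    have hterm : ∀ k ∈ range N, B2 (y + k / ((-N : ℤ) : ℝ)) = B2 (-y + k / N) := by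
      intro k _
      rw [← B2_neg]; push_cast; ring_nf
    simp only [Int.natAbs_neg, Int.natAbs_natCast]
    rw [sum_congr rfl hterm, sum_range_B2_add_div hN, ← B2_neg]
    push_cast
    rw [neg_mul, B2_neg, abs_neg, Nat.abs_cast, mul_neg, B2_neg]

theorem smodEq_span_pair_iff {w₁ w₂ μ ρ : ℤ × ℤ} :
    μ ≡ ρ [SMOD span ℤ {w₁, w₂}] ↔
      ∃ ν₁ ν₂ : ℤ, μ.1 - ρ.1 = ν₁ * w₁.1 + ν₂ * w₂.1 ∧ μ.2 - ρ.2 = ν₁ * w₁.2 + ν₂ * w₂.2 := by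
  simp only [SModEq.sub_mem, mem_span_pair, Prod.ext_iff]
  simp [eq_comm]

theorem Finset.sum_eq_sum_of_existsUnique_rel {α ι M : Type*} [AddCommMonoid M]
    {r : α → α → Prop} (hr : ∀ μ ρ, r μ ρ → r ρ μ) {R : Finset α} {I : Finset ι} {ψ : ι → α}
    (hR : ∀ μ, ∃! ρ, ρ ∈ R ∧ r μ ρ) (hI : ∀ μ, ∃! i, i ∈ I ∧ r μ (ψ i))
    {F : α → M} (hF : ∀ μ ρ, r μ ρ → F μ = F ρ) :
    ∑ ρ ∈ R, F ρ = ∑ i ∈ I, F (ψ i) := by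
  choose j hj using fun μ => (hI μ).exists
  choose k hk using fun μ => (hR μ).exists
  refine sum_nbij' j (fun i => k (ψ i)) (fun ρ _ => (hj ρ).1) (fun i _ => (hk _).1) ?_ ?_ ?_
  · exact fun ρ hρ => (hR (ψ (j ρ))).unique (hk _) ⟨hρ, hr _ _ (hj ρ).2⟩
  · exact fun i hi => (hI (k (ψ i))).unique (hj _) ⟨hi, hr _ _ (hk (ψ i)).2⟩
  · exact fun ρ _ => hF _ _ (hj ρ).2

theorem existsUnique_smodEq_span_triangular {n : ℤ} (hn : n ≠ 0) (e : ℤ) {g : ℕ} (hg : 0 < g)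
    (σ : ℤ × ℤ) :
    ∃! i : ℕ × ℕ, i ∈ range n.natAbs ×ˢ range g ∧
      σ ≡ ((i.1 : ℤ), (i.2 : ℤ)) [SMOD span ℤ {(n, e), (0, (g : ℤ))}] := by
  have hg' : (g : ℤ) ≠ 0 := by exact_mod_cast hg.ne'
  simp only [smodEq_span_pair_iff, mem_product, mem_range, mul_zero, add_zero]
  -- the unique representative is obtained by Euclidean division, first by `n`, then by `g`
  have hdiv : ∀ (i : ℕ × ℕ) (ν₁ ν₂ : ℤ), i.1 < n.natAbs → i.2 < g →
      σ.1 - i.1 = ν₁ * n → σ.2 - i.2 = ν₁ * e + ν₂ * g →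
      (σ.1 / n = ν₁ ∧ σ.1 % n = i.1) ∧ ((σ.2 - ν₁ * e) / g = ν₂ ∧ (σ.2 - ν₁ * e) % g = i.2) := by
    intro i ν₁ ν₂ h1 h2 h3 h4
    refine ⟨(Int.ediv_emod_unique'' hn).mpr ⟨by linarith, by positivity, ?_⟩,
      (Int.ediv_emod_unique'' hg').mpr ⟨by linarith, by positivity, ?_⟩⟩
    · rw [← Int.natCast_natAbs]; exact_mod_cast h1
    · rw [Nat.abs_cast]; exact_mod_cast h2
  set ν₁ := σ.1 / n
  refine ⟨((σ.1 % n).toNat, ((σ.2 - ν₁ * e) % g).toNat),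
    ⟨⟨?_, ?_⟩, ν₁, (σ.2 - ν₁ * e) / g, ?_, ?_⟩, ?_⟩
  · have := Int.emod_lt_abs σ.1 hn
    rw [← Int.natCast_natAbs] at this
    omega
  · have := Int.emod_lt_abs (σ.2 - ν₁ * e) hg'
    rw [Nat.abs_cast] at this
    omega
  · rw [Int.toNat_of_nonneg (Int.emod_nonneg _ hn)]
    linarith [Int.emod_add_mul_ediv σ.1 n]
  · rw [Int.toNat_of_nonneg (Int.emod_nonneg _ hg')]
    linarith [Int.emod_add_mul_ediv (σ.2 - ν₁ * e) g]
  · rintro i ⟨⟨h1, h2⟩, μ₁, μ₂, h3, h4⟩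
    obtain ⟨⟨rfl, hi₁⟩, -, hi₂⟩ := hdiv i μ₁ μ₂ h1 h2 h3 h4
    ext <;> simp [hi₁, hi₂]

def unimodularEquiv (p q r s : ℤ) (h : p * s - q * r = 1) : (ℤ × ℤ) ≃ₗ[ℤ] ℤ × ℤ where
  toFun μ := (p * μ.1 + q * μ.2, r * μ.1 + s * μ.2)
  invFun σ := (s * σ.1 - q * σ.2, p * σ.2 - r * σ.1)
  map_add' μ ν := by ext <;> simp only [Prod.fst_add, Prod.snd_add] <;> ring
  map_smul' c μ := by ext <;> simp only [Prod.smul_fst, Prod.smul_snd, smul_eq_mul,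
    RingHom.id_apply] <;> ring
  left_inv μ := Prod.ext (by dsimp only; linear_combination μ.1 * h)
    (by dsimp only; linear_combination μ.2 * h)
  right_inv σ := Prod.ext (by dsimp only; linear_combination σ.1 * h)
    (by dsimp only; linear_combination σ.2 * h)

theorem exists_linearEquiv_apply_eq_gcd (b d : ℤ) (hg : Int.gcd b d ≠ 0) :
    ∃ Φ : (ℤ × ℤ) ≃ₗ[ℤ] ℤ × ℤ,
      Φ (b, d) = (0, (Int.gcd b d : ℤ)) ∧ ∀ μ, Int.gcd b d * (Φ μ).1 = d * μ.1 - b * μ.2 := by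
  obtain ⟨b', hb⟩ := Int.gcd_dvd_left b d
  obtain ⟨d', hd⟩ := Int.gcd_dvd_right b d
  have hbez : d' * Int.gcdB b d - -b' * Int.gcdA b d = 1 := by
    apply mul_left_cancel₀ (Int.natCast_ne_zero.mpr hg)
    linear_combination -(Int.gcd_eq_gcd_ab b d) - Int.gcdA b d * hb - Int.gcdB b d * hd
  refine ⟨unimodularEquiv d' (-b') (Int.gcdA b d) (Int.gcdB b d) hbez, ?_, fun μ => ?_⟩
  · ext
    · show d' * b + -b' * d = 0
      linear_combination d' * hb - b' * hd
    · show Int.gcdA b d * b + Int.gcdB b d * d = Int.gcd b d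
      rw [Int.gcd_eq_gcd_ab b d]; ring
  · show Int.gcd b d * (d' * μ.1 + -b' * μ.2) = d * μ.1 - b * μ.2
    linear_combination μ.2 * hb - μ.1 * hd

theorem sum_eq_sum_triangular_of_existsUnique {M : Type*} [AddCommMonoid M]
    {L : Submodule ℤ (ℤ × ℤ)} (Φ : (ℤ × ℤ) ≃ₗ[ℤ] ℤ × ℤ) {n e : ℤ} (hn : n ≠ 0) {g : ℕ}
    (hg : 0 < g) (hΦ : L.map (Φ : (ℤ × ℤ) →ₗ[ℤ] ℤ × ℤ) = span ℤ {(n, e), (0, (g : ℤ))})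
    {R : Finset (ℤ × ℤ)} (hR : ∀ μ, ∃! ρ, ρ ∈ R ∧ μ ≡ ρ [SMOD L]) {F : ℤ × ℤ → M}
    (hF : ∀ μ ρ, μ ≡ ρ [SMOD L] → F μ = F ρ) :
    ∑ ρ ∈ R, F ρ = ∑ i ∈ range n.natAbs ×ˢ range g, F (Φ.symm (i.1, i.2)) := by
  refine sum_eq_sum_of_existsUnique_rel (fun _ _ => SModEq.symm) hR (fun μ => ?_) hF
  have hmap : ∀ σ, μ ≡ Φ.symm σ [SMOD L] ↔ Φ μ ≡ σ [SMOD span ℤ {(n, e), (0, (g : ℤ))}] := by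
    intro σ
    rw [SModEq.sub_mem, SModEq.sub_mem, ← hΦ, Submodule.mem_map_equiv, map_sub,
      LinearEquiv.symm_apply_apply]
  simpa only [hmap] using existsUnique_smodEq_span_triangular hn e hg (Φ μ)

theorem sum_B2_of_existsUnique_smodEq (a b c d : ℤ) (hD : a * d - b * c ≠ 0)
    (R : Finset (ℤ × ℤ)) (hR : ∀ μ, ∃! ρ, ρ ∈ R ∧ μ ≡ ρ [SMOD span ℤ {(a, c), (b, d)}])
    (X : ℝ) :
    ∑ ρ ∈ R, B2 ((X + ((d * ρ.1 - b * ρ.2 : ℤ) : ℝ)) / ((a * d - b * c : ℤ) : ℝ))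
      = (Int.gcd b d : ℝ) ^ 2 / |((a * d - b * c : ℤ) : ℝ)| *
          B2 ((((a * d - b * c : ℤ) : ℝ) / (Int.gcd b d : ℝ)) *
            (X / ((a * d - b * c : ℤ) : ℝ))) := by
  have hg : 0 < Int.gcd b d := Int.gcd_pos_iff.mpr (by
    by_contra! h
    obtain ⟨rfl, rfl⟩ := h
    simp at hD)
  set D := a * d - b * c
  obtain ⟨Φ, hΦbd, hΦ⟩ := exists_linearEquiv_apply_eq_gcd b d hg.ne'
  set g := Int.gcd b d
  set n := (Φ (a, c)).1
  have hgn : (g : ℤ) * n = D := by rw [hΦ]; ring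
  have hn : n ≠ 0 := by rintro h; simp [h] at hgn; exact hD hgn.symm
  have hmap : (span ℤ {(a, c), (b, d)}).map (Φ : (ℤ × ℤ) →ₗ[ℤ] ℤ × ℤ)
      = span ℤ {(n, (Φ (a, c)).2), (0, (g : ℤ))} := by
    rw [map_span, Set.image_pair, LinearEquiv.coe_coe, hΦbd]
  have hF : ∀ μ ρ : ℤ × ℤ, μ ≡ ρ [SMOD span ℤ {(a, c), (b, d)}] →
      B2 ((X + ((d * μ.1 - b * μ.2 : ℤ) : ℝ)) / D)
        = B2 ((X + ((d * ρ.1 - b * ρ.2 : ℤ) : ℝ)) / D) := by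
    intro μ ρ h
    obtain ⟨ν₁, ν₂, h1, h2⟩ := smodEq_span_pair_iff.mp h
    have hDr : (D : ℝ) ≠ 0 := by exact_mod_cast hD
    have hℓ : d * μ.1 - b * μ.2 = d * ρ.1 - b * ρ.2 + ν₁ * D := by
      linear_combination d * h1 - b * h2
    rw [hℓ, Int.cast_add, Int.cast_mul, ← add_assoc, add_div, mul_div_cancel_right₀ _ hDr,
      B2_add_intCast]
  have hDr : (D : ℝ) = g * n := by exact_mod_cast hgn.symm
  have hgr : (g : ℝ) ≠ 0 := by exact_mod_cast hg.ne'
  have hterm : ∀ i : ℕ × ℕ,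
      B2 ((X + ((d * (Φ.symm (i.1, i.2)).1 - b * (Φ.symm (i.1, i.2)).2 : ℤ) : ℝ)) / D)
        = B2 (X / D + i.1 / n) := by
    intro i
    rw [← hΦ, LinearEquiv.apply_symm_apply, hDr]
    push_cast
    field_simp
  rw [sum_eq_sum_triangular_of_existsUnique Φ hn hg hmap hR hF, sum_congr rfl fun i _ => hterm i,
    sum_product]
  simp only [sum_const, card_range, nsmul_eq_mul, ← mul_sum]
  rw [sum_range_natAbs_B2_add_div hn, hDr, abs_mul, Nat.abs_cast, mul_div_cancel_left₀ _ hgr]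
  field_simp

/-- **Theorem (Statement 5).** Distribution relation for sums of `B̄₂` over coset
representatives of `ℤ²` modulo `ℤ²γᵀ`. -/
theorem statement5 (a b c d : ℤ) (hdet : a * d - b * c ≠ 0) (R : Finset (ℤ × ℤ))
    (hR : ∀ μ : ℤ × ℤ, ∃! ρ : ℤ × ℤ, ρ ∈ R ∧
      ∃ ν₁ ν₂ : ℤ, μ.1 - ρ.1 = ν₁ * a + ν₂ * b ∧ μ.2 - ρ.2 = ν₁ * c + ν₂ * d)
    (x₁ x₂ : ℝ) :
    (∑ μ ∈ R, B2 (((x₁ + μ.1) * d - (x₂ + μ.2) * b) / ((a * d - b * c : ℤ) : ℝ)))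
      = (Int.gcd b d : ℝ) ^ 2 / |((a * d - b * c : ℤ) : ℝ)| *
          B2 ((((a * d - b * c : ℤ) : ℝ) / (Int.gcd b d : ℝ)) *
            ((x₁ * d - x₂ * b) / ((a * d - b * c : ℤ) : ℝ)))
    ∧ (∑ μ ∈ R, B2 ((-((x₁ + μ.1) * c) + (x₂ + μ.2) * a) / ((a * d - b * c : ℤ) : ℝ)))
      = (Int.gcd a c : ℝ) ^ 2 / |((a * d - b * c : ℤ) : ℝ)| *
          B2 ((((a * d - b * c : ℤ) : ℝ) / (Int.gcd a c : ℝ)) *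
            ((-(x₁ * c) + x₂ * a) / ((a * d - b * c : ℤ) : ℝ))) := by
  have hR' : ∀ μ, ∃! ρ, ρ ∈ R ∧ μ ≡ ρ [SMOD span ℤ {(a, c), (b, d)}] := by
    simpa only [smodEq_span_pair_iff] using hR
  have hdet' : b * c - a * d ≠ 0 := fun h => hdet (by linarith)
  have hneg : ((b * c - a * d : ℤ) : ℝ) = -((a * d - b * c : ℤ) : ℝ) := by push_cast; ring
  constructor
  · convert sum_B2_of_existsUnique_smodEq a b c d hdet R hR' (x₁ * d - x₂ * b) using 3 with μ -
    push_cast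
    ring
  · rw [Set.pair_comm] at hR'
    convert sum_B2_of_existsUnique_smodEq b a d c hdet' R hR' (x₁ * c - x₂ * a) using 2
    all_goals rw [hneg]; generalize ((a * d - b * c : ℤ) : ℝ) = D
    · push_cast; ring_nf
    · rw [abs_neg]
    · rw [← B2_neg]; ring_nf
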